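/- arXiv:1912.06005 — 7 statements merged into one kernel-verified Lean document; each statement's English description precedes it below -/
import Mathlib

section
/- Let d be a positive integer and a₀,…,a_r, k₀,…,k_r positive integers with d ∣ a_i·k_i for all i. The number of solutions in the cyclic quotient space X(d; a₀,…,a_r) = ℂ^{r+1}/μ_d (where ξ·x = (ξ^{a₀}x₀,…,ξ^{a_r}x_r)) of the system x_i^{k_i} = c_i (with all c_i ∈ ℂ∖{0}) equals k₀⋯k_r · gcd(d, a₀,…,a_r) / d. -/
/-!
The weight map `ξ ↦ (ξ ^ a i)ᵢ` sends `μ_d` onto a subgroup `H` of `∏ᵢ μ_{k i}` (as `d ∣ a i * k i`),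
and the orbits of `μ_d` on the solution set `S` are the orbits of `H`. The coordinates of a
solution are nonzero, so `H` acts freely and `|S| = |S / H| * |H|`. Finally `|S| = ∏ᵢ k i`, and the
kernel of the weight map is `μ_g` with `g = gcd(d, a₀, …, a_r)`, so `|H| * g = d`.
-/

open MulAction Polynomial

variable {ι : Type*}

theorem Complex.card_pow_eq {n : ℕ} (hn : n ≠ 0) {c : ℂ} (hc : c ≠ 0) :
    Nat.card {z : ℂ // z ^ n = c} = n := by
  classical
  have hζ := Complex.isPrimitiveRoot_exp n hn
  rw [← Nat.card_congr (Equiv.subtypeEquivRight fun z =>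
      mem_nthRootsFinset (Nat.pos_of_ne_zero hn) c), Nat.card_eq_finsetCard, nthRootsFinset_def,
    Multiset.toFinset_card_of_nodup (hζ.nthRoots_nodup hc), hζ.card_nthRoots,
    if_pos (IsAlgClosed.exists_pow_nat_eq c (Nat.pos_of_ne_zero hn))]

theorem Complex.card_pi_pow_eq [Fintype ι] {k : ι → ℕ} (hk : ∀ i, k i ≠ 0)
    {c : ι → ℂ} (hc : ∀ i, c i ≠ 0) :
    Nat.card {x : ι → ℂ // ∀ i, x i ^ k i = c i} = ∏ i, k i := by
  rw [Nat.card_congr (Equiv.subtypePiEquivPi (p := fun i (z : ℂ) => z ^ k i = c i)), Nat.card_pi]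
  exact Finset.prod_congr rfl fun i _ => card_pow_eq (hk i) (hc i)

section CommMonoid

variable {M : Type*} [CommMonoid M] (d : ℕ) (a k : ι → ℕ)

def powSolutions (c : ι → M) :
    SubMulAction (Subgroup.pi Set.univ fun i => rootsOfUnity (k i) M) (ι → M) where
  carrier := {x | ∀ i, x i ^ k i = c i}
  smul_mem' u x hx i := by
    have hu : ((u : ι → Mˣ) i : M) ^ k i = 1 :=
      (mem_rootsOfUnity' _ _).mp (u.2 i (Set.mem_univ i))
    simp [Subgroup.smul_def, Units.smul_def, mul_pow, hu, hx i]

def weightHom (hdvd : ∀ i, d ∣ a i * k i) :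
    rootsOfUnity d M →* Subgroup.pi Set.univ fun i => rootsOfUnity (k i) M :=
  ((MonoidHom.pi fun i => powMonoidHom (a i)).comp (rootsOfUnity d M).subtype).codRestrict _
    fun ξ i _ => by
      obtain ⟨m, hm⟩ := hdvd i
      change ((ξ : Mˣ) ^ a i) ^ k i = 1
      rw [← pow_mul, hm, pow_mul, (mem_rootsOfUnity _ _).mp ξ.2, one_pow]

variable {d a k}

@[simp]
theorem weightHom_apply (hdvd : ∀ i, d ∣ a i * k i) (ξ : rootsOfUnity d M) (i : ι) :
    (weightHom d a k hdvd ξ : ι → Mˣ) i = (ξ : Mˣ) ^ a i := rfl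

theorem ker_weightHom [Fintype ι] (hdvd : ∀ i, d ∣ a i * k i) :
    (weightHom d a k hdvd).ker =
      (rootsOfUnity (d.gcd (Finset.univ.gcd a)) M).subgroupOf (rootsOfUnity d M) := by
  ext ξ
  have hξ : orderOf ξ ∣ d := orderOf_dvd_of_pow_eq_one (Subtype.ext ξ.2)
  simp only [MonoidHom.mem_ker, Subgroup.mem_subgroupOf, mem_rootsOfUnity, Subtype.ext_iff,
    funext_iff, weightHom_apply]
  simp [← orderOf_dvd_iff_pow_eq_one, Nat.dvd_gcd_iff, Finset.dvd_gcd_iff, hξ]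

theorem orbitRel_range_weightHom_iff [NeZero d] (hdvd : ∀ i, d ∣ a i * k i) {c : ι → M}
    (x y : powSolutions k c) :
    orbitRel (weightHom (M := M) d a k hdvd).range (powSolutions k c) x y ↔
      ∃ ξ : M, ξ ^ d = 1 ∧ ∀ i, (x : ι → M) i = ξ ^ a i * (y : ι → M) i := by
  rw [orbitRel_apply, mem_orbit_iff]
  constructor
  · rintro ⟨⟨_, ξ, rfl⟩, hξ⟩
    refine ⟨((ξ : Mˣ) : M), (mem_rootsOfUnity' _ _).mp ξ.2, fun i => ?_⟩
    rw [← hξ]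
    rfl
  · rintro ⟨ξ, hξ, hxy⟩
    refine ⟨⟨_, rootsOfUnity.mkOfPowEq ξ hξ, rfl⟩, Subtype.ext (funext fun i => ?_)⟩
    rw [hxy i]
    simp [Subgroup.smul_def, Units.smul_def]

end CommMonoid

theorem stabilizer_powSolutions_eq_bot {M : Type*} [CommMonoidWithZero M] [IsCancelMulZero M]
    {k : ι → ℕ} {c : ι → M} (hk : ∀ i, k i ≠ 0) (hc : ∀ i, c i ≠ 0)
    (H : Subgroup (Subgroup.pi Set.univ fun i => rootsOfUnity (k i) M)) (x : powSolutions k c) :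
    stabilizer H x = ⊥ := by
  have hx : ∀ i, (x : ι → M) i ≠ 0 := fun i h => hc i (by rw [← x.2 i, h, zero_pow (hk i)])
  refine (Subgroup.eq_bot_iff_forall _).mpr fun u hu => ?_
  have hu' : ∀ i, ((u : ι → Mˣ) i : M) * (x : ι → M) i = (x : ι → M) i := fun i =>
    congrFun (congrArg Subtype.val hu) i
  ext i
  exact (mul_eq_right₀ (hx i)).mp (hu' i)

theorem card_range_weightHom_mul_gcd [Fintype ι] {d : ℕ} [NeZero d] {a k : ι → ℕ}
    (hdvd : ∀ i, d ∣ a i * k i) :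
    Nat.card (weightHom (M := ℂ) d a k hdvd).range * d.gcd (Finset.univ.gcd a) = d := by
  have : NeZero (d.gcd (Finset.univ.gcd a)) := ⟨(Nat.gcd_pos_of_pos_left _ (NeZero.pos d)).ne'⟩
  have hker : Nat.card (weightHom (M := ℂ) d a k hdvd).ker = d.gcd (Finset.univ.gcd a) := by
    rw [ker_weightHom, Nat.card_congr (Subgroup.subgroupOfEquivOfLe
      (rootsOfUnity_le_of_dvd (Nat.gcd_dvd_left _ _))).toEquiv, Complex.card_rootsOfUnity]
  rw [← hker, ← Subgroup.index_ker, mul_comm, Subgroup.card_mul_index, Complex.card_rootsOfUnity]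

theorem card_solutions_cyclic_quotient_general (r d : ℕ) (hd : 0 < d)
    (a k : Fin (r + 1) → ℕ) (hk : ∀ i, 0 < k i)
    (hdvd : ∀ i, d ∣ a i * k i) (c : Fin (r + 1) → ℂ) (hc : ∀ i, c i ≠ 0) :
    Nat.card (Quot (fun x y : {x : Fin (r + 1) → ℂ // ∀ i, x i ^ k i = c i} =>
        ∃ ξ : ℂ, ξ ^ d = 1 ∧
          ∀ i, (y : Fin (r + 1) → ℂ) i = ξ ^ a i * (x : Fin (r + 1) → ℂ) i)) * d
      = (∏ i, k i) * Nat.gcd d (Finset.univ.gcd a) := by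
  have : NeZero d := ⟨hd.ne'⟩
  have hk' : ∀ i, k i ≠ 0 := fun i => (hk i).ne'
  set H := (weightHom (M := ℂ) d a k hdvd).range
  have e : Quot (fun x y : {x : Fin (r + 1) → ℂ // ∀ i, x i ^ k i = c i} =>
        ∃ ξ : ℂ, ξ ^ d = 1 ∧
          ∀ i, (y : Fin (r + 1) → ℂ) i = ξ ^ a i * (x : Fin (r + 1) → ℂ) i) ≃
      Quotient (orbitRel H (powSolutions k c)) :=
    Quot.congrRight fun x y =>
      ((Setoid.comm' _).trans (orbitRel_range_weightHom_iff hdvd y x)).symm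
  calc _ = Nat.card (Quotient (orbitRel H (powSolutions k c))) * Nat.card H *
        d.gcd (Finset.univ.gcd a) := by
        rw [Nat.card_congr e, mul_assoc, card_range_weightHom_mul_gcd]
    _ = Nat.card (powSolutions k c) * d.gcd (Finset.univ.gcd a) := by
        rw [← Nat.card_prod, Nat.card_congr (selfEquivOrbitsQuotientProd
          (stabilizer_powSolutions_eq_bot hk' hc H)).symm]
    _ = _ := congrArg (· * _) (Complex.card_pi_pow_eq hk' hc)

/-- Counting solutions of `x_i^{k_i} = c_i` in the cyclic quotient space
`X(d; a₀,…,a_r) = ℂ^{r+1}/μ_d`, where `ξ·x = (ξ^{a₀}x₀,…,ξ^{a_r}x_r)`: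
their number equals `k₀⋯k_r · gcd(d, a₀,…,a_r) / d`. -/
theorem card_solutions_cyclic_quotient (r d : ℕ) (hd : 0 < d)
    (a k : Fin (r + 1) → ℕ) (ha : ∀ i, 0 < a i) (hk : ∀ i, 0 < k i)
    (hdvd : ∀ i, d ∣ a i * k i) (c : Fin (r + 1) → ℂ) (hc : ∀ i, c i ≠ 0) :
    Nat.card (Quot (fun x y : {x : Fin (r + 1) → ℂ // ∀ i, x i ^ k i = c i} =>
        ∃ ξ : ℂ, ξ ^ d = 1 ∧
          ∀ i, (y : Fin (r + 1) → ℂ) i = ξ ^ a i * (x : Fin (r + 1) → ℂ) i)) * d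
      = (∏ i, k i) * Nat.gcd d (Finset.univ.gcd a) :=
  card_solutions_cyclic_quotient_general r d hd a k hk hdvd c hc
end

section
/- Let d, a₀, k₀ be positive integers with d ∣ a₀k₀, and let c₀ ∈ ℂ∖{0}. Fix a point (b₁,…,b_r) ∈ (ℂ*)^r. The number of μ_d-orbits in X(d;a₀,…,a_r) of points of the form (x₀,b₁,…,b_r) with x₀^{k₀} = c₀ equals k₀ · gcd(d,a₀,a₁,…,a_r) / gcd(d,a₁,…,a_r). -/
/-!
Because every `b i` is nonzero, the admissible `ξ` are exactly the `g`-th roots of unity,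
`g = gcd(d, a₁, …, a_r)`, and their `a₀`-th powers are exactly the `m`-th roots of unity,
`m = g / gcd(g, a₀)`. So two solutions of `x ^ k₀ = c₀` lie in the same orbit iff they have the
same `m`-th power. As `g ∣ a₀ k₀` forces `m ∣ k₀`, these `m`-th powers are the `k₀ / m` solutions
of `w ^ (k₀ / m) = c₀`, and `(k₀ / m) · g = k₀ · gcd(g, a₀)`.
-/

theorem pow_gcd_eq_one_iff {M : Type*} [Monoid M] {x : M} {m n : ℕ} :
    x ^ m.gcd n = 1 ↔ x ^ m = 1 ∧ x ^ n = 1 := by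
  simp only [← orderOf_dvd_iff_pow_eq_one, Nat.dvd_gcd_iff]

theorem pow_finset_gcd_eq_one_iff {M ι : Type*} [Monoid M] {x : M} {s : Finset ι}
    {f : ι → ℕ} : x ^ s.gcd f = 1 ↔ ∀ i ∈ s, x ^ f i = 1 := by
  simp only [← orderOf_dvd_iff_pow_eq_one, Finset.dvd_gcd_iff]

theorem Fin.univ_gcd_succ {n : ℕ} (f : Fin (n + 1) → ℕ) :
    Finset.univ.gcd f = (f 0).gcd (Finset.univ.gcd fun i : Fin n => f i.succ) := by
  rw [Fin.univ_succ, Finset.gcd_cons, Finset.gcd_def, Finset.map_val, Multiset.map_map,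
    ← Finset.gcd_def]
  rfl

theorem Nat.div_gcd_dvd_of_dvd_mul {g a k : ℕ} (hg : 0 < g) (h : g ∣ a * k) :
    g / g.gcd a ∣ k :=
  (Nat.coprime_div_gcd_div_gcd (Nat.gcd_pos_of_pos_left a hg)).dvd_of_dvd_mul_left <| by
    rw [← Nat.mul_div_right_comm (Nat.gcd_dvd_right g a)]
    exact Nat.div_dvd_div (Nat.gcd_dvd_left g a) h

theorem exists_pow_eq_one_and_eq_mul_iff {G₀ : Type*} [CommGroupWithZero G₀] {m : ℕ}
    {x y : G₀} (hx : x ≠ 0) : (∃ ζ, ζ ^ m = 1 ∧ y = ζ * x) ↔ x ^ m = y ^ m := by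
  constructor
  · rintro ⟨ζ, hζ, rfl⟩
    rw [mul_pow, hζ, one_mul]
  · intro h
    exact ⟨y / x, by rw [div_pow, ← h, div_self (pow_ne_zero m hx)], (div_mul_cancel₀ y hx).symm⟩

namespace IsPrimitiveRoot

theorem pow_div_gcd {M : Type*} [CommMonoid M] {ω : M} {g : ℕ} (hω : IsPrimitiveRoot ω g)
    (hg : 0 < g) (a : ℕ) : IsPrimitiveRoot (ω ^ a) (g / g.gcd a) := by
  rw [IsPrimitiveRoot.iff_orderOf, (hω.isOfFinOrder hg.ne').orderOf_pow, ← hω.eq_orderOf]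

theorem exists_pow_eq_iff {R : Type*} [CommRing R] [IsDomain R] {ω : R} {g : ℕ}
    (hω : IsPrimitiveRoot ω g) (hg : 0 < g) {a : ℕ} {ζ : R} :
    (∃ η, η ^ g = 1 ∧ η ^ a = ζ) ↔ ζ ^ (g / g.gcd a) = 1 := by
  constructor
  · rintro ⟨η, hη, rfl⟩
    rw [← pow_mul, ← Nat.mul_div_assoc a (Nat.gcd_dvd_left g a),
      ← Nat.div_mul_right_comm (Nat.gcd_dvd_right g a), pow_mul', hη, one_pow]
  · intro hζ
    have : NeZero (g / g.gcd a) :=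
      ⟨(Nat.div_pos (Nat.gcd_le_left a hg) (Nat.gcd_pos_of_pos_left a hg)).ne'⟩
    obtain ⟨j, -, rfl⟩ := (hω.pow_div_gcd hg a).eq_pow_of_pow_eq_one hζ
    refine ⟨ω ^ j, ?_, ?_⟩
    · rw [← pow_mul, mul_comm, pow_mul, hω.pow_eq_one, one_pow]
    · rw [← pow_mul, ← pow_mul, mul_comm]

end IsPrimitiveRoot

namespace Complex

theorem exists_pow_eq_one_and_eq_pow_mul_iff {g a : ℕ} (hg : 0 < g) {x y : ℂ} (hx : x ≠ 0) :
    (∃ ξ : ℂ, ξ ^ g = 1 ∧ y = ξ ^ a * x) ↔ x ^ (g / g.gcd a) = y ^ (g / g.gcd a) := by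
  have hω := isPrimitiveRoot_exp g hg.ne'
  rw [← exists_pow_eq_one_and_eq_mul_iff hx]
  constructor
  · rintro ⟨ξ, hξ, rfl⟩
    exact ⟨ξ ^ a, (hω.exists_pow_eq_iff hg).1 ⟨ξ, hξ, rfl⟩, rfl⟩
  · rintro ⟨ζ, hζ, rfl⟩
    obtain ⟨η, hη, rfl⟩ := (hω.exists_pow_eq_iff hg).2 hζ
    exact ⟨η, hη, rfl⟩

theorem card_pow_eq_s4 {n : ℕ} (hn : n ≠ 0) {c : ℂ} (hc : c ≠ 0) :
    Nat.card {z : ℂ // z ^ n = c} = n := by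
  classical
  have hζ := isPrimitiveRoot_exp n hn
  have e : {z : ℂ // z ^ n = c} ≃ Polynomial.nthRootsFinset n c :=
    Equiv.subtypeEquivRight fun z => (Polynomial.mem_nthRootsFinset (Nat.pos_of_ne_zero hn) c).symm
  rw [Nat.card_congr e, Nat.card_eq_fintype_card, Fintype.card_coe, Polynomial.nthRootsFinset_def,
    Multiset.toFinset_card_of_nodup (hζ.nthRoots_nodup hc), hζ.card_nthRoots,
    if_pos ⟨_, cpow_nat_inv_pow c hn⟩]

theorem card_quot_pow_eq_pow {k m : ℕ} (hk : k ≠ 0) (hmk : m ∣ k) {c : ℂ} (hc : c ≠ 0) :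
    Nat.card (Quot fun x y : {z : ℂ // z ^ k = c} => (x : ℂ) ^ m = (y : ℂ) ^ m) = k / m := by
  have hm : m ≠ 0 := by
    rintro rfl
    exact hk (Nat.eq_zero_of_zero_dvd hmk)
  let f : {z : ℂ // z ^ k = c} → ℂ := fun z => (z : ℂ) ^ m
  have hrange : Set.range f = {w | w ^ (k / m) = c} := by
    ext w
    constructor
    · rintro ⟨z, rfl⟩
      rw [Set.mem_ofPred_eq, ← pow_mul, Nat.mul_div_cancel' hmk, z.2]
    · intro hw
      refine ⟨⟨w ^ (m : ℂ)⁻¹, ?_⟩, cpow_nat_inv_pow w hm⟩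
      rw [← Nat.mul_div_cancel' hmk, pow_mul, cpow_nat_inv_pow w hm, hw]
  calc Nat.card (Quot fun x y : {z : ℂ // z ^ k = c} => (x : ℂ) ^ m = (y : ℂ) ^ m)
      = Nat.card (Set.range f) := Nat.card_congr (Setoid.quotientKerEquivRange f)
    _ = k / m := by
      rw [hrange]
      exact card_pow_eq_s4 (Nat.div_ne_zero_iff_of_dvd hmk |>.2 ⟨hk, hm⟩) hc

end Complex

theorem card_solutions_fixed_tail_general (r d k₀ : ℕ) (hd : 0 < d) (hk : 0 < k₀)
    (a : Fin (r + 1) → ℕ) (hdvd : d ∣ a 0 * k₀)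
    (c₀ : ℂ) (hc : c₀ ≠ 0) (b : Fin r → ℂ) (hb : ∀ i, b i ≠ 0) :
    Nat.card (Quot (fun x y : {z : ℂ // z ^ k₀ = c₀} =>
        ∃ ξ : ℂ, ξ ^ d = 1 ∧ (y : ℂ) = ξ ^ a 0 * (x : ℂ) ∧
          ∀ i : Fin r, b i = ξ ^ a i.succ * b i)) *
      Nat.gcd d (Finset.univ.gcd fun i : Fin r => a i.succ)
      = k₀ * Nat.gcd d (Finset.univ.gcd a) := by
  set g := d.gcd (Finset.univ.gcd fun i : Fin r => a i.succ)
  set m := g / g.gcd (a 0)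
  have hg : 0 < g := Nat.gcd_pos_of_pos_left _ hd
  have hmk : m ∣ k₀ := Nat.div_gcd_dvd_of_dvd_mul hg ((Nat.gcd_dvd_left _ _).trans hdvd)
  have hadmissible (ξ : ℂ) : (ξ ^ d = 1 ∧ ∀ i, b i = ξ ^ a i.succ * b i) ↔ ξ ^ g = 1 := by
    simp only [g, pow_gcd_eq_one_iff, pow_finset_gcd_eq_one_iff, Finset.mem_univ, true_imp_iff,
      fun i => right_eq_mul₀ (a := ξ ^ a i.succ) (hb i)]
  have horbit (x y : {z : ℂ // z ^ k₀ = c₀}) :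
      (∃ ξ : ℂ, ξ ^ d = 1 ∧ (y : ℂ) = ξ ^ a 0 * x ∧ ∀ i, b i = ξ ^ a i.succ * b i) ↔
        (x : ℂ) ^ m = (y : ℂ) ^ m := by
    have hx : (x : ℂ) ≠ 0 := fun h => hc (by rw [← x.2, h, zero_pow hk.ne'])
    rw [← Complex.exists_pow_eq_one_and_eq_pow_mul_iff hg hx]
    refine exists_congr fun ξ => ?_
    rw [← hadmissible ξ]
    tauto
  rw [Nat.card_congr (Quot.congrRight horbit), Complex.card_quot_pow_eq_pow hk.ne' hmk hc]
  calc k₀ / m * g = k₀ / m * m * g.gcd (a 0) := by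
        rw [mul_assoc, Nat.div_mul_cancel (Nat.gcd_dvd_left g (a 0))]
    _ = k₀ * d.gcd (Finset.univ.gcd a) := by
        rw [Nat.div_mul_cancel hmk, Fin.univ_gcd_succ, Nat.gcd_comm (a 0), ← Nat.gcd_assoc]

/-- Fix `(b₁,…,b_r) ∈ (ℂ*)^r`.  The number of `μ_d`-orbits in `X(d;a₀,…,a_r)`
of points of the form `(x₀,b₁,…,b_r)` with `x₀^{k₀} = c₀` equals
`k₀ · gcd(d,a₀,a₁,…,a_r) / gcd(d,a₁,…,a_r)`. -/
theorem card_solutions_fixed_tail (r d k₀ : ℕ) (hd : 0 < d) (hk : 0 < k₀)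
    (a : Fin (r + 1) → ℕ) (ha : ∀ i, 0 < a i) (hdvd : d ∣ a 0 * k₀)
    (c₀ : ℂ) (hc : c₀ ≠ 0) (b : Fin r → ℂ) (hb : ∀ i, b i ≠ 0) :
    Nat.card (Quot (fun x y : {z : ℂ // z ^ k₀ = c₀} =>
        ∃ ξ : ℂ, ξ ^ d = 1 ∧ (y : ℂ) = ξ ^ a 0 * (x : ℂ) ∧
          ∀ i : Fin r, b i = ξ ^ a i.succ * b i)) *
      Nat.gcd d (Finset.univ.gcd fun i : Fin r => a i.succ)
      = k₀ * Nat.gcd d (Finset.univ.gcd a) :=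
  card_solutions_fixed_tail_general r d k₀ hd hk a hdvd c₀ hc b hb
end

section
/- Define recursively b_i^{(0)} := b_{i0}·n/n₀ for i > 0 and b_i^{(k)} := b_i^{(k-1)} + (b_{ik}/n_k + ⋯ + b_{i(i-1)}/n_{i-1} − 1)·b_k^{(k-1)} for i > k ≥ 1, where n = n₀n₁⋯n_g. Then for all 1 ≤ k < i ≤ g, b_i^{(k)} = (n_iβ̄_i − n_kβ̄_k) − Σ_{j=k+1}^{i-1} (b_{ij}/n_j)(n_jβ̄_j − n_kβ̄_k). In particular b_{k+1}^{(k)} = n_{k+1}β̄_{k+1} − n_kβ̄_k. -/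
/-- With `b_i^{(0)} = b_{i0}·n/n₀` and
`b_i^{(k)} = b_i^{(k-1)} + (b_{ik}/n_k + ⋯ + b_{i(i-1)}/n_{i-1} − 1)·b_k^{(k-1)}`,
one has, for all `1 ≤ k < i ≤ g`,
`b_i^{(k)} = (n_iβ̄_i − n_kβ̄_k) − Σ_{j=k+1}^{i-1} (b_{ij}/n_j)(n_jβ̄_j − n_kβ̄_k)`;
in particular `b_{k+1}^{(k)} = n_{k+1}β̄_{k+1} − n_kβ̄_k`. -/
theorem b_ik_formula (g : ℕ) (hg : 1 ≤ g) (n β : ℕ → ℚ) (b B : ℕ → ℕ → ℚ)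
    (hnpos : ∀ j ≤ g, 0 < n j) (hβpos : ∀ j ≤ g, 0 < β j)
    (hsem : ∀ i, 1 ≤ i → i ≤ g → n i * β i = ∑ j ∈ Finset.range i, b i j * β j)
    (hb10 : b 1 0 = n 0)
    (hn0 : n 0 * β 0 = ∏ j ∈ Finset.range (g + 1), n j)
    (hn1 : n 1 * β 1 = ∏ j ∈ Finset.range (g + 1), n j)
    (hB0 : ∀ i, 1 ≤ i → B i 0 = b i 0 * (∏ j ∈ Finset.range (g + 1), n j) / n 0)
    (hBrec : ∀ k i, 1 ≤ k → k < i →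
      B i k = B i (k - 1) + ((∑ j ∈ Finset.Icc k (i - 1), b i j / n j) - 1) * B k (k - 1)) :
    (∀ k i, 1 ≤ k → k < i → i ≤ g →
      B i k = (n i * β i - n k * β k)
        - ∑ j ∈ Finset.Icc (k + 1) (i - 1), (b i j / n j) * (n j * β j - n k * β k)) ∧
    (∀ k, 1 ≤ k → k + 1 ≤ g → B (k + 1) k = n (k + 1) * β (k + 1) - n k * β k) := by
  have hIcc : ∀ a i : ℕ, 1 ≤ i → Finset.Icc a (i - 1) = Finset.Ico a i := by
    intro a i hi
    ext x; simp only [Finset.mem_Icc, Finset.mem_Ico]; omega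
  have hmain : ∀ k, 1 ≤ k → ∀ i, k < i → i ≤ g →
      B i k = (n i * β i - n k * β k)
        - ∑ j ∈ Finset.Icc (k + 1) (i - 1), (b i j / n j) * (n j * β j - n k * β k) := by
    intro k hk
    induction k, hk using Nat.le_induction with
    | base =>
      intro i hi hig
      have hi1 : (1:ℕ) ≤ i := le_of_lt hi
      have hn0' : n 0 ≠ 0 := (hnpos 0 (by omega)).ne'
      have hn1' : n 1 ≠ 0 := (hnpos 1 (by omega)).ne'
      have hBi0 : B i 0 = b i 0 * β 0 := by
        rw [hB0 i hi1, ← hn0]; field_simp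
      have hB10 : B 1 0 = n 1 * β 1 := by
        rw [hB0 1 le_rfl, hb10, ← hn1]; field_simp
      have hsplit := hBrec 1 i le_rfl hi
      rw [hIcc 1 i hi1, hIcc 2 i hi1] at *
      have hs : n i * β i = b i 0 * β 0 + ∑ j ∈ Finset.Ico 1 i, b i j * β j := by
        rw [hsem i hi1 hig, Finset.range_eq_Ico, Finset.sum_eq_sum_Ico_succ_bot hi1]
      rw [Finset.sum_eq_sum_Ico_succ_bot hi] at hs
      rw [hsplit, hBi0, hB10, Finset.sum_eq_sum_Ico_succ_bot hi]
      have hkey : ∑ j ∈ Finset.Ico 2 i, (b i j / n j) * (n j * β j - n 1 * β 1)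
          = (∑ j ∈ Finset.Ico 2 i, b i j * β j)
            - (∑ j ∈ Finset.Ico 2 i, b i j / n j) * (n 1 * β 1) := by
        rw [Finset.sum_mul, ← Finset.sum_sub_distrib]
        apply Finset.sum_congr rfl
        intro j hj
        have hj' : j ≤ g := by
          have := (Finset.mem_Ico.mp hj).2; omega
        have hnj : n j ≠ 0 := (hnpos j hj').ne'
        field_simp
      have hb1 : b i 1 / n 1 * (n 1 * β 1) = b i 1 * β 1 := by
        field_simp
      rw [hkey]
      have := hs
      nlinarith [this, hb1]
    | succ k hk ih =>
      intro i hi hig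
      have hki : k < i := by omega
      have hk1g : k + 1 ≤ g := by omega
      have hrec := hBrec (k + 1) i (by omega) hi
      simp only [Nat.add_sub_cancel] at hrec
      have hBik := ih i hki hig
      have hBk1k := ih (k + 1) (by omega) hk1g
      have hempty : Finset.Icc (k + 1) (k + 1 - 1) = ∅ := by
        apply Finset.Icc_eq_empty; omega
      rw [hempty, Finset.sum_empty, sub_zero] at hBk1k
      rw [hIcc (k+1) i (by omega), hIcc (k+1+1) i (by omega)] at *
      rw [hrec, hBik, hBk1k, Finset.sum_eq_sum_Ico_succ_bot hi,
        Finset.sum_eq_sum_Ico_succ_bot hi]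
      have hT : ∑ j ∈ Finset.Ico (k+1+1) i, (b i j / n j) * (n j * β j - n k * β k)
          = (∑ j ∈ Finset.Ico (k+1+1) i, (b i j / n j) * (n j * β j - n (k+1) * β (k+1)))
            + (∑ j ∈ Finset.Ico (k+1+1) i, b i j / n j) * (n (k+1) * β (k+1) - n k * β k) := by
        rw [Finset.sum_mul, ← Finset.sum_add_distrib]
        apply Finset.sum_congr rfl
        intro j hj
        ring
      rw [hT]
      ring
  refine ⟨fun k i hk => hmain k hk i, ?_⟩
  intro k hk hkg
  have := hmain k hk (k + 1) (by omega) hkg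
  rw [this]
  have hempty : Finset.Icc (k + 1) (k + 1 - 1) = ∅ := by
    apply Finset.Icc_eq_empty; omega
  rw [hempty, Finset.sum_empty, sub_zero]
end

section
/- With the notation of the previous statement and the assumptions n_i ≥ 2 and β̄_{i+1} > n_iβ̄_i for all i, one has b_i^{(k)} > 1 for all 1 ≤ k < i ≤ g. Equivalently, (n_iβ̄_i − n_kβ̄_k) − Σ_{j=k+1}^{i-1}(n_jβ̄_j − n_kβ̄_k) > 1. -/
/-- With the recursion for `b_i^{(k)}` and the assumptions `n_i ≥ 2`,
`β̄_{i+1} > n_iβ̄_i`, `0 ≤ b_{ij} < n_j` (for `j ≥ 1`), one has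
`b_i^{(k)} > 1` for all `1 ≤ k < i ≤ g`. -/
theorem b_ik_gt_one (g : ℕ) (hg : 1 ≤ g) (n β : ℕ → ℚ) (b B : ℕ → ℕ → ℚ)
    (hn2 : ∀ j ≤ g, (2 : ℚ) ≤ n j) (hβ1 : ∀ j ≤ g, (1 : ℚ) ≤ β j)
    (hβstep : ∀ i, 1 ≤ i → i < g → n i * β i < β (i + 1))
    (hsem : ∀ i, 1 ≤ i → i ≤ g → n i * β i = ∑ j ∈ Finset.range i, b i j * β j)
    (hb10 : b 1 0 = n 0)
    (hbnn : ∀ i j, 0 ≤ b i j)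
    (hblt : ∀ i j, 1 ≤ j → j < i → i ≤ g → b i j < n j)
    (hn0 : n 0 * β 0 = ∏ j ∈ Finset.range (g + 1), n j)
    (hn1 : n 1 * β 1 = ∏ j ∈ Finset.range (g + 1), n j)
    (hB0 : ∀ i, 1 ≤ i → B i 0 = b i 0 * (∏ j ∈ Finset.range (g + 1), n j) / n 0)
    (hBrec : ∀ k i, 1 ≤ k → k < i →
      B i k = B i (k - 1) + ((∑ j ∈ Finset.Icc k (i - 1), b i j / n j) - 1) * B k (k - 1)) :
    ∀ k i, 1 ≤ k → k < i → i ≤ g → 1 < B i k := by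
  set N : ℚ := ∏ j ∈ Finset.range (g + 1), n j with hN
  have hn_pos : ∀ j ≤ g, (0:ℚ) < n j := fun j hj => lt_of_lt_of_le two_pos (hn2 j hj)
  have hn_ne : ∀ j ≤ g, (n j : ℚ) ≠ 0 := fun j hj => ne_of_gt (hn_pos j hj)
  have hβ_pos : ∀ j ≤ g, (0:ℚ) < β j := fun j hj => lt_of_lt_of_le one_pos (hβ1 j hj)
  -- chain: n k β k < β j for k < j ≤ g
  have hchain : ∀ k, 1 ≤ k → ∀ j, k + 1 ≤ j → j ≤ g → n k * β k < β j := by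
    intro k hk j hj
    induction j, hj using Nat.le_induction with
    | base => intro hig; exact hβstep k hk (by omega)
    | succ j hj ih =>
      intro hj1
      have h1 : n k * β k < β j := ih (by omega)
      have h2 : n j * β j < β (j + 1) := hβstep j (by omega) (by omega)
      have h3 : (0:ℚ) < β j := hβ_pos j (by omega)
      have h4 : (2:ℚ) ≤ n j := hn2 j (by omega)
      nlinarith
  -- closed form for B i k
  have key : ∀ k, 1 ≤ k → ∀ i, k < i → i ≤ g →
      B i k = n i * β i - n k * β k
        + ∑ j ∈ Finset.Icc (k+1) (i-1), b i j * (n k * β k / n j - β j) := by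
    intro k hk
    induction k, hk using Nat.le_induction with
    | base =>
      intro i hi hig
      have hn0ne : (n 0 : ℚ) ≠ 0 := hn_ne 0 (by omega)
      have hB10 : B 1 0 = N := by
        rw [hB0 1 le_rfl, hb10]; field_simp
      have hβ0 : b i 0 * N / n 0 = b i 0 * β 0 := by
        field_simp; rw [← hn0]; ring
      have hBi0 : B i 0 = n i * β i - ∑ j ∈ Finset.Icc 1 (i-1), b i j * β j := by
        rw [hB0 i (by omega), hβ0]
        have hsplit : Finset.range i = insert 0 (Finset.Icc 1 (i-1)) := by
          ext x; simp [Finset.mem_range, Finset.mem_Icc]; omega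
        have := hsem i (by omega) hig
        rw [hsplit, Finset.sum_insert (by simp)] at this
        linarith
      have hrec := hBrec 1 i le_rfl hi
      norm_num at hrec
      -- drop the vanishing j = 1 term
      have hIcc : ∑ j ∈ Finset.Icc 2 (i-1), b i j * (n 1 * β 1 / n j - β j)
          = ∑ j ∈ Finset.Icc 1 (i-1), b i j * (n 1 * β 1 / n j - β j) := by
        have h1 : Finset.Icc 1 (i-1) = insert 1 (Finset.Icc 2 (i-1)) := by
          ext x; simp [Finset.mem_Icc]; omega
        rw [h1, Finset.sum_insert (by simp)]
        have : n 1 * β 1 / n 1 - β 1 = 0 := by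
          rw [mul_comm, mul_div_assoc, div_self (hn_ne 1 hg), mul_one, sub_self]
        rw [this]; ring
      rw [hrec, hBi0, hB10, hIcc, ← hn1]
      rw [sub_mul, one_mul, Finset.sum_mul]
      have hcomb : ∑ j ∈ Finset.Icc 1 (i-1), b i j * (n 1 * β 1 / n j - β j)
          = ∑ j ∈ Finset.Icc 1 (i-1), (b i j / n j * (n 1 * β 1) - b i j * β j) :=
        Finset.sum_congr rfl (fun j _ => by ring)
      rw [hcomb, Finset.sum_sub_distrib]
      ring
    | succ k hk ih =>
      intro i hi hig
      have hBk : B (k+1) k = n (k+1) * β (k+1) - n k * β k := by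
        have h := ih (k+1) (by omega) (by omega)
        have he : Finset.Icc (k+1) (k+1-1) = ∅ := Finset.Icc_eq_empty (by omega)
        rw [he, Finset.sum_empty, add_zero] at h
        exact h
      have hrec := hBrec (k+1) i (by omega) hi
      norm_num at hrec
      have hBik := ih i (by omega) (by omega)
      -- drop vanishing j = k+1 term
      have hIcc : ∑ j ∈ Finset.Icc (k+2) (i-1), b i j * (n (k+1) * β (k+1) / n j - β j)
          = ∑ j ∈ Finset.Icc (k+1) (i-1), b i j * (n (k+1) * β (k+1) / n j - β j) := by
        have h1 : Finset.Icc (k+1) (i-1) = insert (k+1) (Finset.Icc (k+2) (i-1)) := by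
          ext x; simp [Finset.mem_Icc]; omega
        rw [h1, Finset.sum_insert (by simp)]
        have : n (k+1) * β (k+1) / n (k+1) - β (k+1) = 0 := by
          rw [mul_comm, mul_div_assoc, div_self (hn_ne (k+1) (by omega)), mul_one, sub_self]
        rw [this]; ring
      rw [hrec, hBik, hBk, hIcc]
      rw [sub_mul, one_mul, Finset.sum_mul]
      have hcomb : ∑ j ∈ Finset.Icc (k+1) (i-1), b i j * (n (k+1) * β (k+1) / n j - β j)
          = ∑ j ∈ Finset.Icc (k+1) (i-1), (b i j * (n k * β k / n j - β j)
            + b i j / n j * (n (k+1) * β (k+1) - n k * β k)) :=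
        Finset.sum_congr rfl (fun j _ => by ring)
      rw [hcomb, Finset.sum_add_distrib]
      have hmul : ∑ j ∈ Finset.Icc (k+1) (i-1), b i j / n j * (n (k+1) * β (k+1) - n k * β k)
          = (∑ j ∈ Finset.Icc (k+1) (i-1), b i j / n j) * (n (k+1) * β (k+1) - n k * β k) :=
        (Finset.sum_mul ..).symm
      rw [hmul]
      ring
  -- lower bound S(i) > n k β k
  have hS : ∀ k, 1 ≤ k → ∀ i, k < i → i ≤ g →
      n k * β k < n i * β i - n k * β k
        + ∑ j ∈ Finset.Icc (k+1) (i-1), (n k * β k - n j * β j) := by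
    intro k hk i hi
    induction i, hi using Nat.le_induction with
    | base =>
      intro hig
      have hempty : Finset.Icc (k+1) (k+1-1) = ∅ := by
        apply Finset.Icc_eq_empty; omega
      rw [hempty, Finset.sum_empty]
      have h1 := hβstep k hk (by omega)
      have h2 := hn2 (k+1) hig
      have h3 := hβ_pos (k+1) hig
      nlinarith
    | succ i hi ih =>
      intro h
      have h1 := ih (by omega)
      have h2 := hβstep i (by omega) (by omega)
      have h3 := hn2 (i+1) h
      have h4 := hβ_pos (i+1) h
      have hsum : ∑ j ∈ Finset.Icc (k+1) (i+1-1), (n k * β k - n j * β j)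
          = ∑ j ∈ Finset.Icc (k+1) (i-1), (n k * β k - n j * β j)
            + (n k * β k - n i * β i) := by
        have e1 : i + 1 - 1 = (i - 1) + 1 := by omega
        rw [e1, Finset.sum_Icc_succ_top (by omega : k + 1 ≤ i - 1 + 1),
          show i - 1 + 1 = i from by omega]
      rw [hsum]
      have h5 := hn_pos k (by omega)
      have h6 := hβ_pos k (by omega)
      nlinarith [mul_nonneg (by linarith : (0:ℚ) ≤ n (i+1) - 2) (le_of_lt h4),
        mul_pos h5 h6]
  -- main conclusion
  intro k i hk hki hig
  have hkg : k ≤ g := by omega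
  have hcf := key k hk i hki hig
  have hSi := hS k hk i hki hig
  have hle : ∑ j ∈ Finset.Icc (k+1) (i-1), (n k * β k - n j * β j)
      ≤ ∑ j ∈ Finset.Icc (k+1) (i-1), b i j * (n k * β k / n j - β j) := by
    apply Finset.sum_le_sum
    intro j hj
    simp only [Finset.mem_Icc] at hj
    have hjg : j ≤ g := by omega
    have hjn := hn_pos j hjg
    have hfac : n k * β k / n j - β j ≤ 0 := by
      have hc : n k * β k < β j := hchain k hk j (by omega) hjg
      have : β j ≤ n j * β j := by nlinarith [hn2 j hjg, hβ_pos j hjg]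
      rw [sub_nonpos, div_le_iff₀ hjn]
      nlinarith
    have hb : b i j ≤ n j := le_of_lt (hblt i j (by omega) (by omega) hig)
    have := mul_le_mul_of_nonpos_right hb hfac
    calc n k * β k - n j * β j = n j * (n k * β k / n j - β j) := by
          field_simp
      _ ≤ b i j * (n k * β k / n j - β j) := this
  have h2 : (2:ℚ) ≤ n k * β k := by nlinarith [hn2 k hkg, hβ1 k hkg]
  linarith [hcf ▸ (by linarith : n k * β k < n i * β i - n k * β k
    + ∑ j ∈ Finset.Icc (k+1) (i-1), b i j * (n k * β k / n j - β j))]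
end

section
/- For integers n_i ≥ 2 (i = k+1,…,g) and positive integers satisfying n_{j}β̄_{j} < β̄_{j+1} for all j, the inequality (n_iβ̄_i − n_kβ̄_k) − Σ_{j=k+1}^{i-1}(n_jβ̄_j − n_kβ̄_k) > 1 holds for all i > k, proved by induction: the base case is n_{k+1}β̄_{k+1} − n_kβ̄_k > 1. -/
/-- For integers `n_j ≥ 2` and positive integers `β̄_j` with `n_jβ̄_j < β̄_{j+1}`,
the inequality `(n_iβ̄_i − n_kβ̄_k) − Σ_{j=k+1}^{i-1}(n_jβ̄_j − n_kβ̄_k) > 1`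
holds for all `i > k`. -/
theorem chained_inequality (g k : ℕ) (β n : ℕ → ℤ)
    (hβ : ∀ j ≤ g, 0 < β j)
    (hn : ∀ j, k ≤ j → j ≤ g → 2 ≤ n j)
    (hstep : ∀ j, k ≤ j → j < g → n j * β j < β (j + 1)) :
    ∀ i, k < i → i ≤ g →
      1 < (n i * β i - n k * β k)
        - ∑ j ∈ Finset.Icc (k + 1) (i - 1), (n j * β j - n k * β k) := by
  intro i hi
  induction i, hi using Nat.le_induction with
  | base =>
    intro hg
    rw [show k + 1 - 1 = k from rfl, Finset.Icc_eq_empty (by omega), Finset.sum_empty]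
    have h1 := hβ k (by omega)
    have h2 := hβ (k + 1) hg
    have h3 := hn k (le_refl k) (by omega)
    have h4 := hn (k + 1) (by omega) hg
    have h5 := hstep k (le_refl k) (by omega)
    nlinarith
  | succ i hi ih =>
    intro hg
    obtain ⟨m, rfl⟩ : ∃ m, i = m + 1 := ⟨i - 1, by omega⟩
    have hIH := ih (by omega)
    rw [show m + 1 + 1 - 1 = m + 1 from rfl,
      Finset.sum_Icc_succ_top (by omega : k + 1 ≤ m + 1)]
    rw [show m + 1 - 1 = m from rfl] at hIH
    have h1 := hβ k (by omega)
    have h2 := hβ (m + 1) (by omega)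
    have h3 := hβ (m + 2) (by omega)
    have h4 := hn k (le_refl k) (by omega)
    have h5 := hn (m + 2) (by omega) (by omega)
    have h6 := hstep (m + 1) (by omega) (by omega)
    have h7 : β (m + 1 + 1) ≥ n (m + 1) * β (m + 1) + 1 := by omega
    nlinarith
end

section
/- With notation as above, gcd(β̄_k/M_k, e_{k-1}/L_k) = e_k/L_{k+1} for all k = 1,…,g, where M_k = lcm(β̄_k/e_k, n_{k+1},…,n_g), L_k = lcm(n_k,…,n_g), L_{g+1}=1. -/
/-- `e_i = gcd(β̄₀,…,β̄_i)`. -/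
def charE (β : ℕ → ℕ) (i : ℕ) : ℕ := (Finset.range (i + 1)).gcd β

/-- `n_j = e_{j-1}/e_j`. -/
def charN (β : ℕ → ℕ) (j : ℕ) : ℕ := charE β (j - 1) / charE β j

/-- `L_k = lcm(n_k,…,n_g)` (so `L_{g+1} = 1`). -/
def charL (β : ℕ → ℕ) (g k : ℕ) : ℕ := (Finset.Icc k g).lcm (charN β)

/-- `M_k = lcm(β̄_k/e_k, n_{k+1},…,n_g)`. -/
def charM (β : ℕ → ℕ) (g k : ℕ) : ℕ := Nat.lcm (β k / charE β k) (charL β g (k + 1))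

lemma coprime_lcm_div {a b : ℕ} (ha : 0 < a) (hb : 0 < b) :
    Nat.Coprime (Nat.lcm a b / a) (Nat.lcm a b / b) := by
  set L := Nat.lcm a b with hL
  set e := Nat.gcd (L / a) (L / b) with he
  have hLpos : 0 < L := Nat.pos_of_ne_zero (Nat.lcm_ne_zero ha.ne' hb.ne')
  have hae : a * e ∣ L := by
    calc a * e ∣ a * (L / a) := mul_dvd_mul_left a (Nat.gcd_dvd_left _ _)
      _ = L := Nat.mul_div_cancel' (Nat.dvd_lcm_left a b)
  have hbe : b * e ∣ L := by
    calc b * e ∣ b * (L / b) := mul_dvd_mul_left b (Nat.gcd_dvd_right _ _)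
      _ = L := Nat.mul_div_cancel' (Nat.dvd_lcm_right a b)
  have heL : e ∣ L := (dvd_mul_left e a).trans hae
  have ha' : a ∣ L / e := (Nat.dvd_div_iff_mul_dvd heL).mpr (by rwa [mul_comm] at hae)
  have hb' : b ∣ L / e := (Nat.dvd_div_iff_mul_dvd heL).mpr (by rwa [mul_comm] at hbe)
  have hLL : L ∣ L / e := Nat.lcm_dvd ha' hb'
  have : L / e = L := Nat.dvd_antisymm (Nat.div_dvd_of_dvd heL) hLL
  have hepos : 0 < e := by
    rcases Nat.eq_zero_or_pos e with h | h
    · rw [h, Nat.div_zero] at this; omega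
    · exact h
  have h := Nat.eq_mul_of_div_eq_right heL this
  nlinarith [hLpos, hepos]

/-- `gcd (m/a) (m/b) = m / lcm a b` when `a ∣ m` and `b ∣ m`, `m > 0`. -/
lemma gcd_div_div_eq_div_lcm {m a b : ℕ} (hm : 0 < m) (ha : a ∣ m) (hb : b ∣ m) :
    Nat.gcd (m / a) (m / b) = m / Nat.lcm a b := by
  have hapos : 0 < a := Nat.pos_of_dvd_of_pos ha hm
  have hbpos : 0 < b := Nat.pos_of_dvd_of_pos hb hm
  have hLm : Nat.lcm a b ∣ m := Nat.lcm_dvd ha hb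
  have hLpos : 0 < Nat.lcm a b := Nat.pos_of_dvd_of_pos hLm hm
  have h1 : m / a = m / Nat.lcm a b * (Nat.lcm a b / a) := by
    rw [Nat.div_mul_div_comm hLm (Nat.dvd_lcm_left a b), mul_comm m,
      Nat.mul_div_mul_left _ _ hLpos]
  have h2 : m / b = m / Nat.lcm a b * (Nat.lcm a b / b) := by
    rw [Nat.div_mul_div_comm hLm (Nat.dvd_lcm_right a b), mul_comm m,
      Nat.mul_div_mul_left _ _ hLpos]
  rw [h1, h2, Nat.gcd_mul_left, coprime_lcm_div hapos hbpos, mul_one]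

/-- `gcd(β̄_k/M_k, e_{k-1}/L_k) = e_k/L_{k+1}` for all `k = 1,…,g`, where
`M_k = lcm(β̄_k/e_k, n_{k+1},…,n_g)`, `L_k = lcm(n_k,…,n_g)`, `L_{g+1} = 1`. -/
theorem gcd_beta_div_M_e_div_L (g : ℕ) (β : ℕ → ℕ) (hpos : ∀ i ≤ g, 0 < β i) :
    ∀ k, 1 ≤ k → k ≤ g →
      Nat.gcd (β k / charM β g k) (charE β (k - 1) / charL β g k)
        = charE β k / charL β g (k + 1) := by
  intro k hk1 hkg
  -- basic facts about e
  have heb : ∀ i, charE β i ∣ β i := fun i =>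
    Finset.gcd_dvd (Finset.self_mem_range_succ i)
  have hmono : ∀ i j : ℕ, i ≤ j → charE β j ∣ charE β i := fun i j hij =>
    Finset.gcd_mono (by intro x hx; simp only [Finset.mem_range] at *; omega)
  have hepos : ∀ i, i ≤ g → 0 < charE β i := by
    intro i hi
    exact Nat.pos_of_dvd_of_pos (heb i) (hpos i hi)
  have hesucc : charE β k = Nat.gcd (β k) (charE β (k - 1)) := by
    have : k - 1 + 1 = k := by omega
    unfold charE
    rw [← this, Finset.range_add_one, Finset.gcd_insert]
    rfl
  -- facts about n
  have hn_dvd : ∀ j, 1 ≤ j → charN β j ∣ charE β (j - 1) := fun j hj =>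
    Nat.div_dvd_of_dvd (hmono (j - 1) j (by omega))
  have hn_mul : ∀ j, 1 ≤ j → charN β j * charE β j = charE β (j - 1) := fun j hj =>
    Nat.div_mul_cancel (hmono (j - 1) j (by omega))
  -- L_{k+1} divides e_k
  have hL1 : charL β g (k + 1) ∣ charE β k := by
    apply Finset.lcm_dvd
    intro j hj
    simp only [Finset.mem_Icc] at hj
    exact (hn_dvd j (by omega)).trans (hmono k (j - 1) (by omega))
  -- rewrite L_k
  have hLk : charL β g k = Nat.lcm (charN β k) (charL β g (k + 1)) := by
    unfold charL
    rw [show Finset.Icc k g = insert k (Finset.Icc (k + 1) g) by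
      ext x; simp only [Finset.mem_insert, Finset.mem_Icc]; omega,
      Finset.lcm_insert]
    rfl
  have hek1pos : 0 < charE β (k - 1) := hepos (k - 1) (by omega)
  have hekpos : 0 < charE β k := hepos k hkg
  have hβpos : 0 < β k := hpos k hkg
  have hekdvd : charE β k ∣ β k := heb k
  have hek1dvd : charE β k ∣ charE β (k - 1) := hmono (k - 1) k (by omega)
  have hLβ : charL β g (k + 1) ∣ β k := hL1.trans hekdvd
  have hLe1 : charL β g (k + 1) ∣ charE β (k - 1) := hL1.trans hek1dvd
  have hndvd : charN β k ∣ charE β (k - 1) := hn_dvd k hk1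
  -- β k / M k = gcd (e k) (β k / L_{k+1})
  have h1 : β k / charM β g k = Nat.gcd (charE β k) (β k / charL β g (k + 1)) := by
    unfold charM
    rw [← gcd_div_div_eq_div_lcm hβpos (Nat.div_dvd_of_dvd hekdvd) hLβ,
      Nat.div_div_self hekdvd hβpos.ne']
  -- e (k-1) / L k = gcd (e k) (e (k-1) / L_{k+1})
  have h2 : charE β (k - 1) / charL β g k
      = Nat.gcd (charE β k) (charE β (k - 1) / charL β g (k + 1)) := by
    rw [hLk, ← gcd_div_div_eq_div_lcm hek1pos hndvd hLe1]
    congr 1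
    unfold charN
    exact Nat.div_div_self hek1dvd hek1pos.ne'
  rw [h1, h2]
  have h3 : Nat.gcd (β k / charL β g (k + 1)) (charE β (k - 1) / charL β g (k + 1))
      = charE β k / charL β g (k + 1) := by
    rw [Nat.gcd_div hLβ hLe1]
    congr 1
    rw [hesucc]
  have h4 : charE β k / charL β g (k + 1) ∣ charE β k :=
    Nat.div_dvd_of_dvd hL1
  have h5 : charE β k / charL β g (k + 1) ∣ β k / charL β g (k + 1) :=
    h3 ▸ Nat.gcd_dvd_left _ _
  have h6 : charE β k / charL β g (k + 1) ∣ charE β (k - 1) / charL β g (k + 1) :=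
    h3 ▸ Nat.gcd_dvd_right _ _
  apply Nat.dvd_antisymm
  · have : Nat.gcd (Nat.gcd (charE β k) (β k / charL β g (k + 1)))
        (Nat.gcd (charE β k) (charE β (k - 1) / charL β g (k + 1)))
        ∣ Nat.gcd (β k / charL β g (k + 1)) (charE β (k - 1) / charL β g (k + 1)) :=
      Nat.dvd_gcd ((Nat.gcd_dvd_left _ _).trans (Nat.gcd_dvd_right _ _))
        ((Nat.gcd_dvd_right _ _).trans (Nat.gcd_dvd_right _ _))
    rwa [h3] at this
  · exact Nat.dvd_gcd (Nat.dvd_gcd h4 h5) (Nat.dvd_gcd h4 h6)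
end

section
/- Let ν_k/N_k = (Σ_{l=0}^{k}β̄_l − Σ_{l=1}^{k-1}n_lβ̄_l)/(n_kβ̄_k) + (k−1) + Σ_{l=k+1}^{g}1/n_l and suppose e^{−2πi ν_k/N_k} is a root of t^{M_k} − 1, where N_k = lcm(β̄_k/e_k, n_k,…,n_g), M_k = lcm(β̄_k/e_k, n_{k+1},…,n_g). Then n_k divides M_k, hence N_k = M_k. -/
/-- `N_k = lcm(β̄_k/e_k, n_k,…,n_g)`. -/
def charBigN (β : ℕ → ℕ) (g k : ℕ) : ℕ := Nat.lcm (β k / charE β k) (charL β g k)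

/-- The rational number
`ν_k/N_k = (Σ_{l=0}^{k}β̄_l − Σ_{l=1}^{k-1}n_lβ̄_l)/(n_kβ̄_k) + (k−1) + Σ_{l=k+1}^{g}1/n_l`. -/
def nuOverN (β : ℕ → ℕ) (g k : ℕ) : ℚ :=
  ((∑ l ∈ Finset.range (k + 1), (β l : ℚ)) -
      ∑ l ∈ Finset.Icc 1 (k - 1), (charN β l : ℚ) * (β l : ℚ)) /
    ((charN β k : ℚ) * (β k : ℚ)) + ((k : ℚ) - 1) +
  ∑ l ∈ Finset.Icc (k + 1) g, (1 : ℚ) / (charN β l : ℚ)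

/-! The hypothesis says that `(ν_k/N_k) M_k` is an integer. Multiplying out, the terms
`(k - 1) M_k` and `M_k / n_l` (`l > k`) are integers, so `n_k β̄_k ∣ S_k M_k`, where `S_k` is the
numerator of the first summand. Since `n_k β̄_k = e_{k-1} (β̄_k / e_k)`, every `β̄_l M_k` with
`l < k` is a multiple of `n_k β̄_k`; all of `S_k` except `β̄_k` is such a combination, so
`n_k β̄_k ∣ β̄_k M_k`, i.e. `n_k ∣ M_k`. Then `n_k` is redundant in `N_k = lcm(β̄_k/e_k, n_k, L_{k+1})`. -/

/-- `S_k`, the numerator of the first summand of `nuOverN β g k`. -/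
def charS (β : ℕ → ℕ) (k : ℕ) : ℤ :=
  ∑ l ∈ Finset.range (k + 1), (β l : ℤ) - ∑ l ∈ Finset.Icc 1 (k - 1), (charN β l : ℤ) * β l

section charE

variable {β : ℕ → ℕ}

lemma charE_dvd {i j : ℕ} (h : i ≤ j) : charE β j ∣ β i :=
  Finset.gcd_dvd (Finset.mem_range.2 (Nat.lt_succ_of_le h))

lemma charE_dvd_charE {i j : ℕ} (h : i ≤ j) : charE β j ∣ charE β i :=
  Finset.dvd_gcd fun _ hl => charE_dvd ((Nat.lt_succ_iff.1 (Finset.mem_range.1 hl)).trans h)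

lemma charE_pos (hβ0 : 0 < β 0) (i : ℕ) : 0 < charE β i :=
  Nat.pos_of_dvd_of_pos (charE_dvd (Nat.zero_le i)) hβ0

lemma charN_mul_charE (j : ℕ) : charN β j * charE β j = charE β (j - 1) :=
  Nat.div_mul_cancel (charE_dvd_charE (Nat.sub_le j 1))

lemma charN_pos (hβ0 : 0 < β 0) (j : ℕ) : 0 < charN β j :=
  Nat.div_pos (Nat.le_of_dvd (charE_pos hβ0 _) (charE_dvd_charE (Nat.sub_le j 1)))
    (charE_pos hβ0 j)

lemma charN_mul_eq (k : ℕ) : charN β k * β k = charE β (k - 1) * (β k / charE β k) := by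
  conv_lhs => rw [← Nat.div_mul_cancel (charE_dvd (β := β) (le_refl k))]
  rw [mul_comm (β k / charE β k), ← mul_assoc, charN_mul_charE]

lemma charN_mul_dvd_mul {k l : ℕ} (hl : l < k) :
    charN β k * β k ∣ β l * (β k / charE β k) := by
  rw [charN_mul_eq]
  exact mul_dvd_mul_right (charE_dvd (Nat.le_sub_one_of_lt hl)) _

lemma charN_mul_dvd_charS_sub_mul (k : ℕ) :
    ((charN β k * β k : ℕ) : ℤ) ∣ (charS β k - β k) * (β k / charE β k : ℕ) := by
  have hdvd : ∀ l < k, ((charN β k * β k : ℕ) : ℤ) ∣ β l * (β k / charE β k : ℕ) :=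
    fun _ hl => mod_cast charN_mul_dvd_mul hl
  have hsum : charS β k - β k =
      ∑ l ∈ Finset.range k, (β l : ℤ) - ∑ l ∈ Finset.Icc 1 (k - 1), (charN β l : ℤ) * β l := by
    rw [charS, Finset.sum_range_succ]
    ring
  rw [hsum, sub_mul, Finset.sum_mul, Finset.sum_mul]
  refine dvd_sub (Finset.dvd_sum fun l hl => hdvd l (Finset.mem_range.1 hl))
    (Finset.dvd_sum fun l hl => ?_)
  rw [mul_assoc]
  exact (hdvd l (by have := Finset.mem_Icc.1 hl; omega)).mul_left _

end charE

section charM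

variable {β : ℕ → ℕ} {g k : ℕ}

lemma charN_dvd_charM {l : ℕ} (hl : l ∈ Finset.Icc (k + 1) g) : charN β l ∣ charM β g k :=
  (Finset.dvd_lcm hl).trans (Nat.dvd_lcm_right _ _)

lemma div_charE_dvd_charM : β k / charE β k ∣ charM β g k :=
  Nat.dvd_lcm_left _ _

lemma charBigN_eq_charM_of_dvd (hkg : k ≤ g) (h : charN β k ∣ charM β g k) :
    charBigN β g k = charM β g k := by
  rw [charBigN, charL, ← Finset.insert_Icc_succ_left_eq_Icc hkg, Order.succ_eq_add_one,
    Finset.lcm_insert]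
  change lcm _ (lcm _ _) = lcm _ _
  rw [← lcm_assoc, lcm_comm (β k / charE β k), lcm_assoc]
  exact Nat.lcm_eq_right_iff_dvd.2 h

lemma sum_one_div_charN_mul_charM :
    (∑ l ∈ Finset.Icc (k + 1) g, (1 : ℚ) / charN β l) * charM β g k =
      ((∑ l ∈ Finset.Icc (k + 1) g, charM β g k / charN β l : ℕ) : ℚ) := by
  rw [Finset.sum_mul, Nat.cast_sum]
  refine Finset.sum_congr rfl fun l hl => ?_
  rw [Nat.cast_div_charZero (charN_dvd_charM hl)]
  ring

lemma charN_mul_dvd_charS_mul_charM {z : ℤ} (hβ0 : 0 < β 0) (hβk : 0 < β k)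
    (hz : nuOverN β g k * charM β g k = z) :
    ((charN β k * β k : ℕ) : ℤ) ∣ charS β k * charM β g k := by
  have hne : (charN β k : ℚ) * β k ≠ 0 := by
    have := charN_pos hβ0 k
    positivity
  set t := ∑ l ∈ Finset.Icc (k + 1) g, charM β g k / charN β l with ht
  refine ⟨z - (k - 1) * charM β g k - t, ?_⟩
  have hS : (charS β k : ℚ) / (charN β k * β k) * charM β g k
      = z - (k - 1) * charM β g k - t := by
    rw [← hz, nuOverN, add_mul, add_mul, sum_one_div_charN_mul_charM, ← ht, charS]
    push_cast
    ring
  rw [div_mul_eq_mul_div, div_eq_iff hne] at hS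
  exact_mod_cast hS.trans (mul_comm _ _)

lemma charN_dvd_charM_of_dvd (hβk : 0 < β k)
    (h : ((charN β k * β k : ℕ) : ℤ) ∣ charS β k * charM β g k) :
    charN β k ∣ charM β g k := by
  have hrest : ((charN β k * β k : ℕ) : ℤ) ∣ (charS β k - β k) * charM β g k :=
    (charN_mul_dvd_charS_sub_mul k).trans
      (mul_dvd_mul_left _ (Int.natCast_dvd_natCast.2 div_charE_dvd_charM))
  have hβkM : charN β k * β k ∣ charM β g k * β k := by
    have hdiff : charS β k * charM β g k - (charS β k - β k) * charM β g k
        = ((charM β g k * β k : ℕ) : ℤ) := by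
      push_cast
      ring
    exact_mod_cast hdiff ▸ dvd_sub h hrest
  exact Nat.dvd_of_mul_dvd_mul_right hβk hβkM

end charM

lemma exists_int_mul_eq_of_exp_pow_eq_one {q : ℚ} {m : ℕ}
    (h : Complex.exp (-(2 * Real.pi) * Complex.I * (q : ℂ)) ^ m = 1) : ∃ z : ℤ, q * m = z := by
  rw [← Complex.exp_nat_mul, Complex.exp_eq_one_iff] at h
  obtain ⟨n, hn⟩ := h
  have hne : 2 * (Real.pi : ℂ) * Complex.I ≠ 0 := by
    have := Real.pi_ne_zero
    simp [this]
  refine ⟨-n, ?_⟩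
  have : ((q * m : ℚ) : ℂ) = ((-n : ℤ) : ℂ) := by
    apply mul_right_cancel₀ hne
    push_cast
    linear_combination -hn
  exact_mod_cast this

theorem nk_dvd_Mk_of_root_general (g k : ℕ) (β : ℕ → ℕ) (hpos : ∀ i ≤ g, 0 < β i)
    (hkg : k ≤ g)
    (hroot : Complex.exp (-(2 * Real.pi) * Complex.I * ((nuOverN β g k : ℚ) : ℂ))
        ^ charM β g k = 1) :
    charN β k ∣ charM β g k ∧ charBigN β g k = charM β g k := by
  have hβk : 0 < β k := hpos k hkg
  obtain ⟨z, hz⟩ := exists_int_mul_eq_of_exp_pow_eq_one hroot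
  have hnk : charN β k ∣ charM β g k := charN_dvd_charM_of_dvd hβk
    (charN_mul_dvd_charS_mul_charM (hpos 0 g.zero_le) hβk hz)
  exact ⟨hnk, charBigN_eq_charM_of_dvd hkg hnk⟩

/-- If `e^{−2πi ν_k/N_k}` is a root of `t^{M_k} − 1`, then `n_k` divides `M_k`,
hence `N_k = M_k`. -/
theorem nk_dvd_Mk_of_root (g k : ℕ) (β : ℕ → ℕ) (hpos : ∀ i ≤ g, 0 < β i)
    (hk1 : 1 ≤ k) (hkg : k ≤ g)
    (hroot : Complex.exp (-(2 * Real.pi) * Complex.I * ((nuOverN β g k : ℚ) : ℂ))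
        ^ charM β g k = 1) :
    charN β k ∣ charM β g k ∧ charBigN β g k = charM β g k :=
  nk_dvd_Mk_of_root_general g k β hpos hkg hroot
end
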